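/- Fix real numbers σ11 > 0, σ22 > 0, s11 ≥ 0, s22 ≥ 0, s12 with s12² ≤ s11·s22, A ≥ 0, and C, and assume the nondegeneracy condition (★): s12 ≠ (s22·σ11 + s11·σ22)/(2√(σ11·σ22)) and s12 ≠ −(s22·σ11 + s11·σ22)/(2√(σ11·σ22)). Define η(t) = C − (A/2)·log(σ22 − t²/σ11) − (s22 − 2·(t/σ11)·s12 + (t²/σ11²)·s11)/(2·(σ22 − t²/σ11)) for t in D = (−√(σ11·σ22), √(σ11·σ22)), and define the polynomial P(t) = s12·σ11·σ22 + (σ11·σ22·A − s22·σ11 − s11·σ22)·t + s12·t² − A·t³. Then there exists t* ∈ D such that η(t) ≤ η(t*) for all t ∈ D, and every such global maximum point t* satisfies P(t*) = 0. -/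

import Mathlib

/-!
Write `η = C - (A/2) log v - Q/(2v)` with `v(t) = σ22 - t²/σ11`, which is positive on the
interval and vanishes at its endpoints, and `Q(t) ≥ 0` (Cauchy–Schwarz). Condition (★) says
exactly that `Q` does not vanish at the endpoints; since `v log v → 0`, the term `-Q/(2v)`
then drives `η` to `-∞` at both ends, so the continuous function `η` attains its maximum inside.
At an interior maximum `η' = 0`, and `η'(t) = P(t)/(σ11σ22 - t²)²`.
-/

open Real Filter Topology Set

lemma quadratic_nonneg_of_sq_le_mul {a b c : ℝ} (ha : 0 ≤ a) (hc : 0 ≤ c) (h : b ^ 2 ≤ a * c)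
    (x : ℝ) : 0 ≤ c - 2 * x * b + x ^ 2 * a := by
  rcases ha.eq_or_lt with rfl | ha
  · obtain rfl : b = 0 := by nlinarith [sq_nonneg b]
    simpa using hc
  · nlinarith [sq_nonneg (a * x - b)]

lemma tendsto_sub_log_sub_div_atBot {α : Type*} {l : Filter α} {u Q : α → ℝ} {q : ℝ}
    (hu : Tendsto u l (𝓝[>] 0)) (hQ : Tendsto Q l (𝓝 q)) (hq : 0 < q) (A C : ℝ) :
    Tendsto (fun x => C - A / 2 * log (u x) - Q x / (2 * u x)) l atBot := by
  have hu_log : Tendsto (fun x => u x * log (u x)) l (𝓝 0) := by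
    simpa [Function.comp_def] using
      (continuous_mul_log.tendsto 0).comp (hu.mono_right nhdsWithin_le_nhds)
  have hnum : Tendsto (fun x => A * (u x * log (u x)) + Q x) l (𝓝 q) := by
    simpa using (hu_log.const_mul A).add hQ
  have hratio : Tendsto (fun x => (A * (u x * log (u x)) + Q x) * (u x)⁻¹ / 2) l atTop :=
    (hnum.pos_mul_atTop hq (tendsto_inv_nhdsGT_zero.comp hu)).atTop_div_const two_pos
  refine (tendsto_atBot_add_const_left l C (tendsto_neg_atTop_atBot.comp hratio)).congr' ?_
  filter_upwards [hu self_mem_nhdsWithin] with x (hx : 0 < u x)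
  simp only [Function.comp_apply]
  field_simp
  ring

lemma exists_isMaxOn_Ioo_of_tendsto_atBot {f : ℝ → ℝ} {a b : ℝ} (hab : a < b)
    (hf : ContinuousOn f (Ioo a b)) (ha : Tendsto f (𝓝[>] a) atBot)
    (hb : Tendsto f (𝓝[<] b) atBot) : ∃ c ∈ Ioo a b, IsMaxOn f (Ioo a b) c := by
  obtain ⟨x₀, hx₀⟩ := nonempty_Ioo.2 hab
  obtain ⟨a', ha', hlow⟩ := mem_nhdsGT_iff_exists_Ioo_subset.1 (ha.eventually_lt_atBot (f x₀))
  obtain ⟨b', hb', hhigh⟩ := mem_nhdsLT_iff_exists_Ioo_subset.1 (hb.eventually_lt_atBot (f x₀))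
  set K := Icc (min a' x₀) (max b' x₀)
  have hK : K ⊆ Ioo a b := Icc_subset_Ioo (lt_min ha' hx₀.1) (max_lt hb' hx₀.2)
  have hx₀K : x₀ ∈ K := ⟨min_le_right _ _, le_max_right _ _⟩
  obtain ⟨c, hcK, hc⟩ := isCompact_Icc.exists_isMaxOn ⟨x₀, hx₀K⟩ (hf.mono hK)
  refine ⟨c, hK hcK, fun t ht => ?_⟩
  by_cases htK : t ∈ K
  · exact hc htK
  have hft : f t < f x₀ := by
    rcases not_and_or.1 htK with h | h
    · exact hlow ⟨ht.1, (not_le.1 h).trans_le (min_le_left _ _)⟩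
    · exact hhigh ⟨(le_max_left _ _).trans_lt (not_le.1 h), ht.2⟩
  exact hft.le.trans (hc hx₀K)

namespace DPER

-- With `t = σ12`: `condVar` is the conditional variance `σ22 - σ12²/σ11` of the second
-- coordinate given the first, and `rss` the residual sum of squares for the slope `σ12/σ11`.

noncomputable def condVar (σ11 σ22 t : ℝ) : ℝ := σ22 - t ^ 2 / σ11

noncomputable def rss (σ11 s11 s22 s12 t : ℝ) : ℝ :=
  s22 - 2 * (t / σ11) * s12 + t ^ 2 / σ11 ^ 2 * s11

noncomputable def eta (σ11 σ22 s11 s22 s12 A C t : ℝ) : ℝ :=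
  C - A / 2 * log (condVar σ11 σ22 t) - rss σ11 s11 s22 s12 t / (2 * condVar σ11 σ22 t)

def cubic (σ11 σ22 s11 s22 s12 A t : ℝ) : ℝ :=
  s12 * σ11 * σ22 + (σ11 * σ22 * A - s22 * σ11 - s11 * σ22) * t + s12 * t ^ 2 - A * t ^ 3

variable {σ11 σ22 s11 s22 s12 : ℝ}

lemma condVar_eq (hσ11 : σ11 ≠ 0) (t : ℝ) : condVar σ11 σ22 t = (σ11 * σ22 - t ^ 2) / σ11 := by
  unfold condVar
  field_simp

lemma condVar_pos (hσ11 : 0 < σ11) {t : ℝ} (ht : t ^ 2 < σ11 * σ22) : 0 < condVar σ11 σ22 t := by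
  rw [condVar_eq hσ11.ne']
  exact div_pos (sub_pos.2 ht) hσ11

lemma continuous_condVar (σ11 σ22 : ℝ) : Continuous (condVar σ11 σ22) := by
  unfold condVar; fun_prop

lemma continuous_rss (σ11 s11 s22 s12 : ℝ) : Continuous (rss σ11 s11 s22 s12) := by
  unfold rss; fun_prop

lemma rss_nonneg (hs11 : 0 ≤ s11) (hs22 : 0 ≤ s22) (hcs : s12 ^ 2 ≤ s11 * s22) (t : ℝ) :
    0 ≤ rss σ11 s11 s22 s12 t := by
  simpa [rss, div_pow] using quadratic_nonneg_of_sq_le_mul hs11 hs22 hcs (t / σ11)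

lemma rss_pos_of_sq_eq (hσ11 : 0 < σ11) (hs11 : 0 ≤ s11) (hs22 : 0 ≤ s22)
    (hcs : s12 ^ 2 ≤ s11 * s22) {c : ℝ} (hc : c ^ 2 = σ11 * σ22)
    (hstar : s12 * (2 * c) ≠ s22 * σ11 + s11 * σ22) : 0 < rss σ11 s11 s22 s12 c := by
  have hrss : rss σ11 s11 s22 s12 c = (s22 * σ11 + s11 * σ22 - s12 * (2 * c)) / σ11 := by
    unfold rss
    rw [hc]
    field_simp
    ring
  refine (rss_nonneg hs11 hs22 hcs c).lt_of_ne' ?_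
  rw [hrss]
  exact div_ne_zero (sub_ne_zero.2 hstar.symm) hσ11.ne'

lemma hasDerivAt_condVar (σ11 σ22 t : ℝ) : HasDerivAt (condVar σ11 σ22) (-(2 * t) / σ11) t := by
  unfold condVar
  simpa [neg_div] using ((hasDerivAt_pow 2 t).div_const σ11).const_sub σ22

lemma hasDerivAt_rss (σ11 s11 s22 s12 t : ℝ) :
    HasDerivAt (rss σ11 s11 s22 s12) (-(2 * (1 / σ11) * s12) + 2 * t / σ11 ^ 2 * s11) t := by
  have hlin := (((hasDerivAt_id t).div_const σ11).const_mul 2).mul_const s12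
  have hquad := ((hasDerivAt_pow 2 t).div_const (σ11 ^ 2)).mul_const s11
  unfold rss
  simpa using (hlin.const_sub s22).fun_add hquad

lemma hasDerivAt_eta (hσ11 : σ11 ≠ 0) (A C : ℝ) {t : ℝ} (ht : t ^ 2 ≠ σ11 * σ22) :
    HasDerivAt (eta σ11 σ22 s11 s22 s12 A C)
      (cubic σ11 σ22 s11 s22 s12 A t / (σ11 * σ22 - t ^ 2) ^ 2) t := by
  have hne : σ11 * σ22 - t ^ 2 ≠ 0 := sub_ne_zero.2 ht.symm
  have hv : condVar σ11 σ22 t ≠ 0 := by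
    rw [condVar_eq hσ11]; exact div_ne_zero hne hσ11
  have hv2 : 2 * condVar σ11 σ22 t ≠ 0 := mul_ne_zero two_ne_zero hv
  have hv' := hasDerivAt_condVar σ11 σ22 t
  refine (((hv'.log hv).const_mul (A / 2)).const_sub C |>.fun_sub
    ((hasDerivAt_rss σ11 s11 s22 s12 t).fun_div (hv'.const_mul 2) hv2)).congr_deriv ?_
  rw [condVar_eq hσ11, rss]
  unfold cubic
  field_simp
  ring

lemma continuousOn_eta (hσ11 : 0 < σ11) (A C : ℝ) :
    ContinuousOn (eta σ11 σ22 s11 s22 s12 A C)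
      (Ioo (-√(σ11 * σ22)) √(σ11 * σ22)) := fun _t ht =>
  (hasDerivAt_eta hσ11.ne' A C (Real.sq_lt.2 ht).ne).continuousAt.continuousWithinAt

lemma tendsto_eta_atBot (hσ11 : 0 < σ11) (A C : ℝ) {l : Filter ℝ} {c : ℝ} (hl : l ≤ 𝓝 c)
    (hlD : ∀ᶠ t in l, t ^ 2 < σ11 * σ22) (hc : c ^ 2 = σ11 * σ22)
    (hrss : 0 < rss σ11 s11 s22 s12 c) :
    Tendsto (eta σ11 σ22 s11 s22 s12 A C) l atBot := by
  have hv : Tendsto (condVar σ11 σ22) l (𝓝[>] 0) := by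
    refine tendsto_nhdsWithin_iff.2 ⟨?_, hlD.mono fun t ht => condVar_pos hσ11 ht⟩
    have h0 : condVar σ11 σ22 c = 0 := by rw [condVar_eq hσ11.ne', hc, sub_self, zero_div]
    simpa [h0] using ((continuous_condVar σ11 σ22).tendsto c).mono_left hl
  exact tendsto_sub_log_sub_div_atBot hv
    (((continuous_rss σ11 s11 s22 s12).tendsto c).mono_left hl) hrss A C

lemma cubic_eq_zero_of_isLocalMax (hσ11 : σ11 ≠ 0) {A C t : ℝ} (ht : t ^ 2 ≠ σ11 * σ22)
    (hmax : IsLocalMax (eta σ11 σ22 s11 s22 s12 A C) t) : cubic σ11 σ22 s11 s22 s12 A t = 0 := by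
  have h := hmax.hasDerivAt_eq_zero (hasDerivAt_eta hσ11 A C ht)
  exact (div_eq_zero_iff.1 h).resolve_right (pow_ne_zero 2 (sub_ne_zero.2 ht.symm))

end DPER

open DPER

theorem eta_global_max_is_root_of_cubic_general
    (σ11 σ22 s11 s22 s12 A C : ℝ) (h11 : 0 < σ11) (h22 : 0 < σ22)
    (hs11 : 0 ≤ s11) (hs22 : 0 ≤ s22) (hcs : s12 ^ 2 ≤ s11 * s22)
    (hstar1 : s12 ≠ (s22 * σ11 + s11 * σ22) / (2 * Real.sqrt (σ11 * σ22)))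
    (hstar2 : s12 ≠ -((s22 * σ11 + s11 * σ22) / (2 * Real.sqrt (σ11 * σ22)))) :
    (∃ tstar ∈ Set.Ioo (-Real.sqrt (σ11 * σ22)) (Real.sqrt (σ11 * σ22)),
      ∀ t ∈ Set.Ioo (-Real.sqrt (σ11 * σ22)) (Real.sqrt (σ11 * σ22)),
        (C - A / 2 * Real.log (σ22 - t ^ 2 / σ11)
            - (s22 - 2 * (t / σ11) * s12 + t ^ 2 / σ11 ^ 2 * s11)
              / (2 * (σ22 - t ^ 2 / σ11)))
          ≤ C - A / 2 * Real.log (σ22 - tstar ^ 2 / σ11)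
            - (s22 - 2 * (tstar / σ11) * s12 + tstar ^ 2 / σ11 ^ 2 * s11)
              / (2 * (σ22 - tstar ^ 2 / σ11))) ∧
    (∀ tstar ∈ Set.Ioo (-Real.sqrt (σ11 * σ22)) (Real.sqrt (σ11 * σ22)),
      (∀ t ∈ Set.Ioo (-Real.sqrt (σ11 * σ22)) (Real.sqrt (σ11 * σ22)),
        (C - A / 2 * Real.log (σ22 - t ^ 2 / σ11)
            - (s22 - 2 * (t / σ11) * s12 + t ^ 2 / σ11 ^ 2 * s11)
              / (2 * (σ22 - t ^ 2 / σ11)))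
          ≤ C - A / 2 * Real.log (σ22 - tstar ^ 2 / σ11)
            - (s22 - 2 * (tstar / σ11) * s12 + tstar ^ 2 / σ11 ^ 2 * s11)
              / (2 * (σ22 - tstar ^ 2 / σ11))) →
      s12 * σ11 * σ22 + (σ11 * σ22 * A - s22 * σ11 - s11 * σ22) * tstar
          + s12 * tstar ^ 2 - A * tstar ^ 3 = 0) := by
  have hσ : 0 < σ11 * σ22 := mul_pos h11 h22
  have hb : 0 < √(σ11 * σ22) := Real.sqrt_pos.2 hσ
  have hD : ∀ t ∈ Ioo (-√(σ11 * σ22)) √(σ11 * σ22), t ^ 2 < σ11 * σ22 :=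
    fun t ht => Real.sq_lt.2 ht
  refine ⟨?_, fun t₀ ht₀ hmax =>
    cubic_eq_zero_of_isLocalMax h11.ne' (hD t₀ ht₀).ne
      ((isMaxOn_iff.2 hmax).isLocalMax (Ioo_mem_nhds ht₀.1 ht₀.2))⟩
  have hleft : Tendsto (eta σ11 σ22 s11 s22 s12 A C) (𝓝[>] (-√(σ11 * σ22))) atBot := by
    refine tendsto_eta_atBot h11 A C nhdsWithin_le_nhds
      (eventually_of_mem (Ioo_mem_nhdsGT (neg_lt_self hb)) hD)
      (by rw [neg_sq, sq_sqrt hσ.le]) (rss_pos_of_sq_eq h11 hs11 hs22 hcs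
        (by rw [neg_sq, sq_sqrt hσ.le]) fun h => hstar2 ?_)
    field_simp
    linarith
  have hright : Tendsto (eta σ11 σ22 s11 s22 s12 A C) (𝓝[<] √(σ11 * σ22)) atBot :=
    tendsto_eta_atBot h11 A C nhdsWithin_le_nhds
      (eventually_of_mem (Ioo_mem_nhdsLT (neg_lt_self hb)) hD) (sq_sqrt hσ.le)
      (rss_pos_of_sq_eq h11 hs11 hs22 hcs (sq_sqrt hσ.le)
        ((eq_div_iff (by positivity)).not.1 hstar1))
  obtain ⟨c, hc, hmax⟩ := exists_isMaxOn_Ioo_of_tendsto_atBot (neg_lt_self hb)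
    (continuousOn_eta h11 A C) hleft hright
  exact ⟨c, hc, isMaxOn_iff.1 hmax⟩

/-- Main claim of Theorems 2 and 4 of the DPER paper: the profile log-likelihood `η`
attains a global maximum inside the open interval `(−√(σ11·σ22), √(σ11·σ22))`, and every
global maximum point is a real root of the cubic polynomial `P`. -/
theorem eta_global_max_is_root_of_cubic
    (σ11 σ22 s11 s22 s12 A C : ℝ) (h11 : 0 < σ11) (h22 : 0 < σ22)
    (hs11 : 0 ≤ s11) (hs22 : 0 ≤ s22) (hcs : s12 ^ 2 ≤ s11 * s22) (hA : 0 ≤ A)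
    (hstar1 : s12 ≠ (s22 * σ11 + s11 * σ22) / (2 * Real.sqrt (σ11 * σ22)))
    (hstar2 : s12 ≠ -((s22 * σ11 + s11 * σ22) / (2 * Real.sqrt (σ11 * σ22)))) :
    (∃ tstar ∈ Set.Ioo (-Real.sqrt (σ11 * σ22)) (Real.sqrt (σ11 * σ22)),
      ∀ t ∈ Set.Ioo (-Real.sqrt (σ11 * σ22)) (Real.sqrt (σ11 * σ22)),
        (C - A / 2 * Real.log (σ22 - t ^ 2 / σ11)
            - (s22 - 2 * (t / σ11) * s12 + t ^ 2 / σ11 ^ 2 * s11)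
              / (2 * (σ22 - t ^ 2 / σ11)))
          ≤ C - A / 2 * Real.log (σ22 - tstar ^ 2 / σ11)
            - (s22 - 2 * (tstar / σ11) * s12 + tstar ^ 2 / σ11 ^ 2 * s11)
              / (2 * (σ22 - tstar ^ 2 / σ11))) ∧
    (∀ tstar ∈ Set.Ioo (-Real.sqrt (σ11 * σ22)) (Real.sqrt (σ11 * σ22)),
      (∀ t ∈ Set.Ioo (-Real.sqrt (σ11 * σ22)) (Real.sqrt (σ11 * σ22)),
        (C - A / 2 * Real.log (σ22 - t ^ 2 / σ11)
            - (s22 - 2 * (t / σ11) * s12 + t ^ 2 / σ11 ^ 2 * s11)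
              / (2 * (σ22 - t ^ 2 / σ11)))
          ≤ C - A / 2 * Real.log (σ22 - tstar ^ 2 / σ11)
            - (s22 - 2 * (tstar / σ11) * s12 + tstar ^ 2 / σ11 ^ 2 * s11)
              / (2 * (σ22 - tstar ^ 2 / σ11))) →
      s12 * σ11 * σ22 + (σ11 * σ22 * A - s22 * σ11 - s11 * σ22) * tstar
          + s12 * tstar ^ 2 - A * tstar ^ 3 = 0) :=
  eta_global_max_is_root_of_cubic_general σ11 σ22 s11 s22 s12 A C h11 h22 hs11 hs22 hcs hstar1
    hstar2
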